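/- Let ℓ ≥ 2 and let G be a graph on ℓ vertices whose K_4-bootstrap closure is the complete graph K_ℓ (i.e. G internally spans K_ℓ). Then G has at least 2ℓ − 3 edges. -/

import Mathlib

open Finset

/-- The edge set of the copy of `H` under the injection `f`. -/
def copyEdges {W V : Type*} (H : SimpleGraph W) (f : W ↪ V) : Set (Sym2 V) :=
  Sym2.map f '' H.edgeSet

/-- One step of the `H`-bootstrap process: infect every edge `e` for which some copy of `H`
contains `e` and has all its other edges already infected. -/
def bootStep {W V : Type*} (H : SimpleGraph W) (E : Set (Sym2 V)) : Set (Sym2 V) :=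
  E ∪ {e | ∃ f : W ↪ V, e ∈ copyEdges H f ∧ copyEdges H f ⊆ insert e E}

/-- The closure of `E` under the `H`-bootstrap process. -/
def bootClosure {W V : Type*} (H : SimpleGraph W) (E : Set (Sym2 V)) : Set (Sym2 V) :=
  ⋃ t, (bootStep H)^[t] E

/-- `E` percolates in the `H`-bootstrap process on the complete graph on `V`. -/
def Percolates {W V : Type*} (H : SimpleGraph W) (E : Set (Sym2 V)) : Prop :=
  bootClosure H E = (⊤ : SimpleGraph V).edgeSet

/-- The expectation of `X` under the Erdős–Rényi random graph `G_{n,p}`,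
written as a sum over all graphs on `[n]`, weighted by their probabilities. -/
noncomputable def gnpExp (n : ℕ) (p : ℝ) (X : Finset (Sym2 (Fin n)) → ℝ) : ℝ :=
  ∑ E ∈ (⊤ : SimpleGraph (Fin n)).edgeFinset.powerset,
    p ^ E.card * (1 - p) ^ ((⊤ : SimpleGraph (Fin n)).edgeFinset.card - E.card) * X E

/- probability of event `A` under `G_{n,p}` -/
open Classical in
noncomputable def gnpProb (n : ℕ) (p : ℝ) (A : Finset (Sym2 (Fin n)) → Prop) : ℝ :=
  gnpExp n p (fun E => if A E then 1 else 0)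

/-- The critical probability for `H`-bootstrap percolation on `K_n`. -/
noncomputable def pc {W : Type*} (n : ℕ) (H : SimpleGraph W) : ℝ :=
  sInf {p : ℝ | p ∈ Set.Icc (0 : ℝ) 1 ∧
    1 / 2 ≤ gnpProb n p (fun E => Percolates H (↑E : Set (Sym2 (Fin n))))}

/-- `λ(r) = (C(r,2) - 2)/(r - 2)`. -/
noncomputable def lam (r : ℕ) : ℝ := ((r.choose 2 : ℝ) - 2) / ((r : ℝ) - 2)


/-!
Place the vertices on the parabola `v ↦ (x v, x v ^ 2)` and give each edge `ij` its row in the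
rigidity matrix of this planar framework. Any four points of the parabola satisfy an affine
dependency `∑ tᵢ = 0`, `∑ tᵢ pᵢ = 0` with every `tᵢ ≠ 0` (the Lagrange nodal weights), and
`ωᵢⱼ = tᵢ tⱼ` is then an equilibrium stress of the `K₄`. So the row of each edge of a `K₄` lies in
the span of the rows of its other five edges, and the span of the rows of `G` is invariant under
the `K₄`-bootstrap process. If `G` percolates, this span contains the rows of all edges of `K_ℓ`;
those of the book graph (an edge `uw` with all the triangles on it) are `2ℓ - 3` independent
vectors, so `G` has at least `2ℓ - 3` edges.
-/

open Function Submodule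

section Rigidity

variable {K V E : Type*} [CommRing K] [AddCommGroup E] [Module K E] [DecidableEq V]

def rigidityRow (p : V → E) : Sym2 V → V → E :=
  Sym2.lift ⟨fun i j => Pi.single i (p i - p j) + Pi.single j (p j - p i), fun _ _ => add_comm _ _⟩

@[simp]
theorem rigidityRow_mk (p : V → E) (i j : V) :
    rigidityRow p s(i, j) = Pi.single i (p i - p j) + Pi.single j (p j - p i) := rfl

theorem rigidityRow_apply_of_notMem (p : V → E) {e : Sym2 V} {k : V} (hk : k ∉ e) :
    rigidityRow p e k = 0 := by
  induction e using Sym2.ind with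
  | h i j =>
    obtain ⟨hi, hj⟩ : k ≠ i ∧ k ≠ j := by simpa using hk
    simp [hi, hj]

theorem rigidityRow_mk_apply_left (p : V → E) {i j : V} (h : i ≠ j) :
    rigidityRow p s(i, j) i = p i - p j := by
  simp [h]

theorem sum_sum_smul_rigidityRow_eq_zero {W : Type*} [Fintype W] (p : V → E) (f : W → V)
    (t : W → K) (h₀ : ∑ a, t a = 0) (h₁ : ∑ a, t a • p (f a) = 0) :
    ∑ a, ∑ b, (t a * t b) • rigidityRow p s(f a, f b) = 0 := by
  have hequilibrium :
      ∀ a, ∑ b, (t a * t b) • (Pi.single (f a) (p (f a) - p (f b)) : V → E) = 0 := by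
    intro a
    have : ∑ b, (t a * t b) • (p (f a) - p (f b)) = 0 := by
      simp_rw [mul_smul, ← Finset.smul_sum, smul_sub, Finset.sum_sub_distrib, ← Finset.sum_smul,
        h₀, h₁, zero_smul, sub_zero, smul_zero]
    calc ∑ b, (t a * t b) • (Pi.single (f a) (p (f a) - p (f b)) : V → E)
        = ∑ b, Pi.single (f a) ((t a * t b) • (p (f a) - p (f b))) := by simp_rw [Pi.single_smul]
      _ = Pi.single (f a) (∑ b, (t a * t b) • (p (f a) - p (f b))) :=
          (map_sum (AddMonoidHom.single (fun _ => E) (f a)) _ _).symm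
      _ = 0 := by rw [this, Pi.single_zero]
  simp only [rigidityRow_mk, smul_add, Finset.sum_add_distrib]
  rw [Finset.sum_comm (f := fun a b => (t a * t b) • (Pi.single (f b) (p (f b) - p (f a)) : V → E))]
  simp [hequilibrium, mul_comm]

end Rigidity

theorem mem_span_copyEdges_diff_of_sum_eq_zero {K V W M : Type*} [DivisionRing K] [AddCommGroup M]
    [Module K M] [Fintype W] (r : Sym2 V → M) (hr : ∀ v, r s(v, v) = 0) (f : W ↪ V)
    (c : W → W → K) (hc : ∑ i, ∑ j, c i j • r s(f i, f j) = 0) {a b : W} (hab : a ≠ b)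
    (hne : c a b + c b a ≠ 0) :
    r s(f a, f b) ∈
      span K (r '' (copyEdges (SimpleGraph.completeGraph W) f \ {s(f a, f b)})) := by
  set S := span K (r '' (copyEdges (SimpleGraph.completeGraph W) f \ {s(f a, f b)}))
  have hvanish : ∀ x : W × W, x ≠ (a, b) ∧ x ≠ (b, a) →
      S.mkQ (c x.1 x.2 • r s(f x.1, f x.2)) = 0 := by
    rintro ⟨i, j⟩ ⟨hab', hba'⟩
    rw [mkQ_apply, Quotient.mk_eq_zero]
    refine S.smul_mem _ ?_
    by_cases hij : i = j
    · rw [hij, hr]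
      exact S.zero_mem
    refine subset_span ⟨_, ⟨⟨s(i, j), by simpa using hij, rfl⟩, ?_⟩, rfl⟩
    rw [Set.mem_singleton_iff, ← Sym2.map_mk, (Sym2.map.injective f.injective).eq_iff,
      Sym2.eq_iff]
    simp_all [Prod.ext_iff]
  have hsum := congrArg S.mkQ hc
  simp only [map_zero, map_sum] at hsum
  rw [← Fintype.sum_prod_type', Fintype.sum_eq_add (a, b) (b, a) (by simp [hab]) hvanish] at hsum
  dsimp only at hsum
  rw [Sym2.eq_swap (a := f b), ← map_add, ← add_smul, map_smul, smul_eq_zero] at hsum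
  exact (Quotient.mk_eq_zero S).mp (hsum.resolve_left hne)

theorem Lagrange.sum_nodalWeight_mul_pow_eq_zero {F ι : Type*} [Field F] [DecidableEq ι]
    {s : Finset ι} {v : ι → F} (hvs : Set.InjOn v s) {k : ℕ} (hk : k + 1 < s.card) :
    ∑ i ∈ s, nodalWeight s v i * v i ^ k = 0 := by
  have h := coeff_eq_sum hvs (P := Polynomial.X ^ k) (by
    rw [Polynomial.degree_X_pow]; exact_mod_cast (by omega : k < s.card))
  rw [Polynomial.coeff_X_pow, if_neg (by omega)] at h
  simpa [nodalWeight, Finset.prod_inv_distrib, div_eq_mul_inv, mul_comm] using h.symm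

section MomentCurve

variable {K V : Type*} [Field K]

def momentCurve (x : V → K) (v : V) : K × K := (x v, x v ^ 2)

theorem linearIndependent_momentCurve_sub {x : V → K} (hx : Injective x) {j u w : V}
    (hju : j ≠ u) (hjw : j ≠ w) (huw : u ≠ w) :
    LinearIndependent K
      ![momentCurve x j - momentCurve x u, momentCurve x j - momentCurve x w] := by
  rw [LinearIndependent.pair_iff]
  intro s t hst
  simp only [momentCurve, Prod.ext_iff, Prod.fst_add, Prod.snd_add, Prod.smul_fst, Prod.smul_snd,
    Prod.fst_sub, Prod.snd_sub, smul_eq_mul, Prod.fst_zero, Prod.snd_zero] at hst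
  obtain ⟨h₁, h₂⟩ := hst
  have hju' : x j - x u ≠ 0 := sub_ne_zero.mpr (hx.ne hju)
  have hjw' : x j - x w ≠ 0 := sub_ne_zero.mpr (hx.ne hjw)
  have hwu' : x w - x u ≠ 0 := sub_ne_zero.mpr (hx.ne huw.symm)
  have ht : t * ((x j - x w) * (x w - x u)) = 0 := by linear_combination h₂ - (x j + x u) * h₁
  have ht0 : t = 0 := by simpa [hjw', hwu'] using ht
  subst ht0
  exact ⟨by simpa [hju'] using h₁, rfl⟩

theorem rigidityRow_momentCurve_mem_span_copyEdges_diff [DecidableEq V] [NeZero (2 : K)]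
    {W : Type*} [Fintype W] (hW : 4 ≤ Fintype.card W) {x : V → K} (hx : Injective x)
    (f : W ↪ V) {e : Sym2 V} (he : e ∈ copyEdges (SimpleGraph.completeGraph W) f) :
    rigidityRow (momentCurve x) e ∈ span K
      (rigidityRow (momentCurve x) '' (copyEdges (SimpleGraph.completeGraph W) f \ {e})) := by
  classical
  obtain ⟨e', he', rfl⟩ := he
  induction e' using Sym2.ind with
  | h a b =>
  have hab : a ≠ b := by simpa using he'
  set t := Lagrange.nodalWeight Finset.univ (x ∘ f)
  have hinj : Set.InjOn (x ∘ f) (Finset.univ : Finset W) := (hx.comp f.injective).injOn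
  have ht : ∀ k ≤ 2, ∑ i, t i * x (f i) ^ k = 0 := fun k hk =>
    Lagrange.sum_nodalWeight_mul_pow_eq_zero hinj (by rw [Finset.card_univ]; omega)
  have hstress := sum_sum_smul_rigidityRow_eq_zero (momentCurve x) f t
    (by simpa using ht 0 (by norm_num))
    (Prod.ext (by simpa [momentCurve, Prod.fst_sum] using ht 1 (by norm_num))
      (by simpa [momentCurve, Prod.snd_sum] using ht 2 le_rfl))
  have ht0 : ∀ i, t i ≠ 0 := fun i => Lagrange.nodalWeight_ne_zero hinj (Finset.mem_univ i)
  rw [Sym2.map_mk]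
  refine mem_span_copyEdges_diff_of_sum_eq_zero _ (fun v => by simp) f _ hstress hab ?_
  rw [mul_comm (t b), ← two_mul]
  exact mul_ne_zero two_ne_zero (mul_ne_zero (ht0 a) (ht0 b))

end MomentCurve

section Bootstrap

variable {K W V M : Type*} [Semiring K] [AddCommMonoid M] [Module K M]

theorem bootStep_subset_preimage (H : SimpleGraph W) (r : Sym2 V → M) (S : Submodule K M)
    (hH : ∀ (f : W ↪ V), ∀ e ∈ copyEdges H f, r e ∈ span K (r '' (copyEdges H f \ {e})))
    {F : Set (Sym2 V)} (hF : F ⊆ r ⁻¹' S) : bootStep H F ⊆ r ⁻¹' S := by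
  rintro e (he | ⟨f, he, hsub⟩)
  · exact hF he
  · refine span_le.mpr ?_ (hH f e he)
    rintro _ ⟨e', ⟨he', hne⟩, rfl⟩
    exact hF ((hsub he').resolve_left hne)

theorem bootClosure_subset_preimage_span (H : SimpleGraph W) (r : Sym2 V → M)
    (hH : ∀ (f : W ↪ V), ∀ e ∈ copyEdges H f, r e ∈ span K (r '' (copyEdges H f \ {e})))
    (E : Set (Sym2 V)) : bootClosure H E ⊆ r ⁻¹' span K (r '' E) := by
  refine Set.iUnion_subset fun n => ?_
  induction n with
  | zero => exact Set.image_subset_iff.mp subset_span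
  | succ n ih =>
    rw [iterate_succ_apply']
    exact bootStep_subset_preimage H r _ hH ih

end Bootstrap

section Book

variable {V : Type*} [Fintype V] [DecidableEq V]

def bookEdge (u w : V) : Option (Bool × ({u, w}ᶜ : Finset V)) → Sym2 V
  | none => s(u, w)
  | some (b, j) => s(cond b u w, j)

theorem bookEdge_not_isDiag {u w : V} (huw : u ≠ w) (i : Option (Bool × ({u, w}ᶜ : Finset V))) :
    ¬ (bookEdge u w i).IsDiag := by
  rcases i with _ | ⟨_ | _, j, hj⟩ <;> grind [bookEdge, Sym2.mk_isDiag_iff, Finset.mem_compl]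

theorem card_bookEdge_index {u w : V} (huw : u ≠ w) :
    Fintype.card (Option (Bool × ({u, w}ᶜ : Finset V))) = 2 * Fintype.card V - 3 := by
  have := Finset.card_le_univ {u, w}
  rw [Finset.card_pair huw] at this
  rw [Fintype.card_option, Fintype.card_prod, Fintype.card_bool, Fintype.card_coe,
    Finset.card_compl, Finset.card_pair huw]
  omega

theorem linearIndependent_rigidityRow_bookEdge {K : Type*} [Field K] {x : V → K}
    (hx : Injective x) {u w : V} (huw : u ≠ w) :
    LinearIndependent K (rigidityRow (momentCurve x) ∘ bookEdge u w) := by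
  rw [Fintype.linearIndependent_iff]
  intro g hg
  have hpage : ∀ (j : ({u, w}ᶜ : Finset V)) b, g (some (b, j)) = 0 := by
    rintro ⟨j, hj⟩
    obtain ⟨hju, hjw⟩ : j ≠ u ∧ j ≠ w := by simpa [not_or] using hj
    have hsum := congrFun hg j
    rw [Finset.sum_apply, Fintype.sum_eq_add (some (true, ⟨j, hj⟩)) (some (false, ⟨j, hj⟩))
      (by simp)] at hsum
    · simp only [Pi.smul_apply, comp_apply, bookEdge, cond_true, cond_false] at hsum
      rw [Sym2.eq_swap, rigidityRow_mk_apply_left _ hju, Sym2.eq_swap,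
        rigidityRow_mk_apply_left _ hjw] at hsum
      have := LinearIndependent.pair_iff.mp (linearIndependent_momentCurve_sub hx hju hjw huw) _ _
        hsum
      simpa [Bool.forall_bool] using this.symm
    · intro i hi
      rw [Pi.smul_apply, comp_apply, rigidityRow_apply_of_notMem _ ?_, smul_zero]
      rcases i with _ | ⟨_ | _, j', hj'⟩ <;> grind [bookEdge]
  have hspine : g none = 0 := by
    have hsum := congrFun hg u
    rw [Finset.sum_apply, Fintype.sum_eq_single none] at hsum
    · rw [Pi.smul_apply, comp_apply, bookEdge, rigidityRow_mk_apply_left _ huw] at hsum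
      refine (smul_eq_zero.mp hsum).resolve_right fun h => hx.ne huw ?_
      simpa [momentCurve, sub_eq_zero] using congrArg Prod.fst h
    · rintro (_ | ⟨b, j⟩) hi
      · exact absurd rfl hi
      · simp [hpage]
  rintro (_ | ⟨b, j⟩)
  exacts [hspine, hpage j b]

end Book

theorem LinearIndependent.card_le_ncard_of_range_subset_span {K M ι α : Type*} [DivisionRing K]
    [AddCommGroup M] [Module K M] [Fintype ι] {v : ι → M} (hv : LinearIndependent K v)
    {r : α → M} {E : Set α} (hE : E.Finite) (h : Set.range v ⊆ span K (r '' E)) :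
    Fintype.card ι ≤ E.ncard := by
  have := (hE.image r).fintype
  calc Fintype.card ι ≤ Fintype.card (r '' E) := linearIndependent_le_span_aux' v hv _ h
    _ = (r '' E).ncard := by rw [Set.ncard_eq_toFinset_card', Set.toFinset_card]
    _ ≤ E.ncard := Set.ncard_image_le hE

theorem internally_spanned_min_edges (ℓ : ℕ) (hℓ : 2 ≤ ℓ) (G : SimpleGraph (Fin ℓ))
    (h : bootClosure (SimpleGraph.completeGraph (Fin 4)) G.edgeSet =
      (⊤ : SimpleGraph (Fin ℓ)).edgeSet) :
    2 * ℓ - 3 ≤ G.edgeSet.ncard := by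
  set p := momentCurve (fun v : Fin ℓ => (v : ℝ))
  have hx : Injective (fun v : Fin ℓ => (v : ℝ)) := Nat.cast_injective.comp Fin.val_injective
  have hspan := bootClosure_subset_preimage_span (K := ℝ) _ (rigidityRow p)
    (fun f _ => rigidityRow_momentCurve_mem_span_copyEdges_diff (Fintype.card_fin 4).ge hx f)
    G.edgeSet
  obtain ⟨u, w, huw⟩ : ∃ u w : Fin ℓ, u ≠ w := ⟨⟨0, by omega⟩, ⟨1, by omega⟩, by simp⟩
  have hrange : Set.range (rigidityRow p ∘ bookEdge u w) ⊆ span ℝ (rigidityRow p '' G.edgeSet) := by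
    rintro _ ⟨i, rfl⟩
    refine hspan ?_
    rw [h, SimpleGraph.edgeSet_top]
    exact bookEdge_not_isDiag huw i
  have hcard := (linearIndependent_rigidityRow_bookEdge hx huw).card_le_ncard_of_range_subset_span
    G.edgeSet.toFinite hrange
  rwa [card_bookEdge_index huw, Fintype.card_fin] at hcard
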